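/- arXiv:1211.2090 — 2 statements merged into one kernel-verified Lean document; each statement's English description precedes it below -/
import Mathlib

section
/- Let G be a Shapley network design game with k ≥ 2 players, let N be a Nash equilibrium with Φ(N) ≤ Φ(O), where O is a social optimum, and suppose that no edge of O is used by all k players (i.e., O^k = ∅). Then cost(N) ≤ H_{k−1} · cost(O). -/
/-- The `n`-th harmonic number `H_n = ∑_{i=1}^n 1/i`, as a real number. -/
noncomputable def harmonicR (n : ℕ) : ℝ := ∑ i ∈ Finset.range n, (1 : ℝ) / (i + 1)

/-- A Shapley network design game with `k` players on a finite undirected graph: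
an undirected simple graph `G` on the vertex type `V`, positive edge costs `c`,
and terminal pairs `s i`, `t i` for each player `i`. -/
structure ShapleyGame (V : Type) [Fintype V] [DecidableEq V] (k : ℕ) where
  G : SimpleGraph V
  c : Sym2 V → ℝ
  c_pos : ∀ e ∈ G.edgeSet, 0 < c e
  s : Fin k → V
  t : Fin k → V

namespace ShapleyGame

variable {V : Type} [Fintype V] [DecidableEq V] {k : ℕ}

/-- A strategy profile: a simple `s i`–`t i` path for each player `i`. -/
abbrev Profile (g : ShapleyGame V k) : Type :=
  ∀ i : Fin k, g.G.Path (g.s i) (g.t i)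

/-- `k_e`: the number of players whose path uses edge `e` in profile `P`. -/
def ke (g : ShapleyGame V k) (P : g.Profile) (e : Sym2 V) : ℕ :=
  (Finset.univ.filter fun i : Fin k => e ∈ (P i).1.edges).card

/-- The set `E(P)` of edges used by at least one player in profile `P`. -/
def profileEdges (g : ShapleyGame V k) (P : g.Profile) : Finset (Sym2 V) :=
  Finset.univ.filter fun e : Sym2 V => ∃ i : Fin k, e ∈ (P i).1.edges

/-- The individual cost of player `i`: each edge cost is shared equally
among the players using the edge. -/
noncomputable def playerCost (g : ShapleyGame V k) (P : g.Profile) (i : Fin k) : ℝ :=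
  ∑ e ∈ (P i).1.edges.toFinset, g.c e / (g.ke P e)

/-- The social cost of a profile: total cost of all used edges. -/
noncomputable def socialCost (g : ShapleyGame V k) (P : g.Profile) : ℝ :=
  ∑ e ∈ g.profileEdges P, g.c e

/-- Rosenthal's potential `Φ(P) = ∑_{e ∈ E(P)} H_{k_e} · c_e`. -/
noncomputable def potential (g : ShapleyGame V k) (P : g.Profile) : ℝ :=
  ∑ e ∈ g.profileEdges P, harmonicR (g.ke P e) * g.c e

/-- `P` is a Nash equilibrium: no player can decrease her individual cost
by unilaterally switching to another simple path. -/
def IsNash (g : ShapleyGame V k) (P : g.Profile) : Prop :=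
  ∀ (i : Fin k) (Q : g.G.Path (g.s i) (g.t i)),
    g.playerCost P i ≤ g.playerCost (Function.update P i Q) i

/-- `P` is a social optimum: it minimizes the social cost over all profiles. -/
def IsSocialOpt (g : ShapleyGame V k) (P : g.Profile) : Prop :=
  ∀ Q : g.Profile, g.socialCost P ≤ g.socialCost Q

/-- `P` is a potential minimizer: it minimizes Rosenthal's potential over all profiles. -/
def IsPotMin (g : ShapleyGame V k) (P : g.Profile) : Prop :=
  ∀ Q : g.Profile, g.potential P ≤ g.potential Q

/-- `P^j`: the set of edges used by exactly `j` players in profile `P`. -/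
def exactly (g : ShapleyGame V k) (P : g.Profile) (j : ℕ) : Finset (Sym2 V) :=
  (g.profileEdges P).filter fun e => g.ke P e = j

/-- `|M|`: the total cost of a set of edges. -/
noncomputable def csum (g : ShapleyGame V k) (M : Finset (Sym2 V)) : ℝ := ∑ e ∈ M, g.c e

end ShapleyGame

theorem harmonicR_mono : Monotone harmonicR := fun _ _ h =>
  Finset.sum_le_sum_of_subset_of_nonneg (Finset.range_mono h) fun _ _ _ => by positivity

theorem one_le_harmonicR {n : ℕ} (hn : 1 ≤ n) : 1 ≤ harmonicR n :=
  calc (1 : ℝ) = harmonicR 1 := by simp [harmonicR]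
    _ ≤ harmonicR n := harmonicR_mono hn

namespace ShapleyGame

variable {V : Type} [Fintype V] [DecidableEq V] {k : ℕ} (g : ShapleyGame V k) (P : g.Profile)

theorem c_pos_of_mem_profileEdges {e : Sym2 V} (he : e ∈ g.profileEdges P) : 0 < g.c e := by
  obtain ⟨-, i, hi⟩ := Finset.mem_filter.1 he
  exact g.c_pos e ((P i).1.edges_subset_edgeSet hi)

theorem one_le_ke_of_mem_profileEdges {e : Sym2 V} (he : e ∈ g.profileEdges P) :
    1 ≤ g.ke P e := by
  obtain ⟨-, i, hi⟩ := Finset.mem_filter.1 he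
  exact Finset.card_pos.2 ⟨i, Finset.mem_filter.2 ⟨Finset.mem_univ i, hi⟩⟩

theorem ke_le (e : Sym2 V) : g.ke P e ≤ k :=
  (Finset.card_filter_le _ _).trans_eq (Finset.card_fin k)

theorem ke_le_pred_of_exactly_eq_empty (hP : g.exactly P k = ∅) {e : Sym2 V}
    (he : e ∈ g.profileEdges P) : g.ke P e ≤ k - 1 := by
  have hne : g.ke P e ≠ k := fun hk =>
    Finset.notMem_empty e (hP ▸ Finset.mem_filter.2 ⟨he, hk⟩)
  have := g.ke_le P e
  omega

theorem socialCost_le_potential : g.socialCost P ≤ g.potential P :=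
  Finset.sum_le_sum fun _ he =>
    le_mul_of_one_le_left (g.c_pos_of_mem_profileEdges P he).le
      (one_le_harmonicR (g.one_le_ke_of_mem_profileEdges P he))

theorem potential_le_harmonicR_mul_socialCost {j : ℕ}
    (hj : ∀ e ∈ g.profileEdges P, g.ke P e ≤ j) :
    g.potential P ≤ harmonicR j * g.socialCost P := by
  rw [socialCost, Finset.mul_sum]
  exact Finset.sum_le_sum fun e he =>
    mul_le_mul_of_nonneg_right (harmonicR_mono (hj e he)) (g.c_pos_of_mem_profileEdges P he).le

end ShapleyGame

theorem no_full_edge_bound_general {V : Type} [Fintype V] [DecidableEq V] {k : ℕ}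
    (g : ShapleyGame V k) (N O : g.Profile)
    (hpot : g.potential N ≤ g.potential O)
    (hOk : g.exactly O k = ∅) :
    g.socialCost N ≤ harmonicR (k - 1) * g.socialCost O :=
  calc g.socialCost N ≤ g.potential N := g.socialCost_le_potential N
    _ ≤ g.potential O := hpot
    _ ≤ harmonicR (k - 1) * g.socialCost O :=
      g.potential_le_harmonicR_mul_socialCost O fun _ => g.ke_le_pred_of_exactly_eq_empty O hOk

/-- if `N` is a Nash equilibrium with `Φ(N) ≤ Φ(O)` for a social
optimum `O` in which no edge is used by all `k ≥ 2` players, then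
`cost(N) ≤ H_{k−1} · cost(O)`. -/
theorem no_full_edge_bound {V : Type} [Fintype V] [DecidableEq V] {k : ℕ} (hk : 2 ≤ k)
    (g : ShapleyGame V k) (N O : g.Profile)
    (hN : g.IsNash N) (hO : g.IsSocialOpt O)
    (hpot : g.potential N ≤ g.potential O)
    (hOk : g.exactly O k = ∅) :
    g.socialCost N ≤ harmonicR (k - 1) * g.socialCost O :=
  no_full_edge_bound_general g N O hpot hOk
end

section
/- Let O be a social optimum of a Shapley network design game with k players in which the set O^k of edges used by all k players is non-empty. Then the edge set E(O)∖O^k induces exactly two trees, and every player i has exactly one of her two terminals s_i, t_i in each of the two trees. -/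
namespace SimpleGraph

variable {V : Type*} {G : SimpleGraph V} {a b u v x y : V}

theorem Walk.reachable_of_forall_mem_edges {H : SimpleGraph V} (p : G.Walk a b)
    (h : ∀ ⦃u v⦄, s(u, v) ∈ p.edges → H.Reachable u v) : H.Reachable a b := by
  induction p with
  | nil => rfl
  | cons _ _ ih => exact (h (by simp)).trans (ih fun u v huv => h (by simp [huv]))

theorem Walk.reachable_fromEdgeSet_of_mem_support [DecidableEq V] {S : Set (Sym2 V)}
    (p : G.Walk a b) (hp : ∀ e ∈ p.edges, e ∈ S) (hu : u ∈ p.support) (hv : v ∈ p.support) :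
    (fromEdgeSet S).Reachable u v := by
  have reach_from_start (w : V) (hw : w ∈ p.support) : (fromEdgeSet S).Reachable a w :=
    (p.takeUntil w hw).reachable_of_forall_mem_edges fun x y hxy => by
      replace hxy := p.edges_takeUntil_subset_edges hw hxy
      exact Adj.reachable ((fromEdgeSet_adj S).mpr ⟨hp _ hxy, (p.adj_of_mem_edges hxy).ne⟩)
  exact (reach_from_start u hu).symm.trans (reach_from_start v hv)

theorem Walk.exists_eq_append_cons_of_first_mem_edges {S : Set (Sym2 V)} (p : G.Walk a b)
    (h : ∃ e ∈ p.edges, e ∈ S) :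
    ∃ (x y : V) (q₁ : G.Walk a x) (hxy : G.Adj x y) (q₂ : G.Walk y b),
      p = q₁.append (cons hxy q₂) ∧ s(x, y) ∈ S ∧ ∀ e ∈ q₁.edges, e ∉ S := by
  induction p with
  | nil => simp at h
  | @cons u c _ hadj p ih =>
    by_cases hfirst : s(u, c) ∈ S
    · exact ⟨u, c, nil, hadj, p, by simp, hfirst, by simp⟩
    · obtain ⟨x, y, q₁, hxy, q₂, rfl, hS, hq₁⟩ :=
        ih (by simpa [or_and_right, exists_or, hfirst] using h)
      refine ⟨x, y, cons hadj q₁, hxy, q₂, rfl, hS, ?_⟩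
      simp only [edges_cons, List.mem_cons, forall_eq_or_imp]
      exact ⟨hfirst, hq₁⟩

theorem Walk.IsTrail.notMem_edges_of_append_cons {q₁ : G.Walk a x} {hxy : G.Adj x y}
    {q₂ : G.Walk y b} (h : (q₁.append (cons hxy q₂)).IsTrail) :
    s(x, y) ∉ q₁.edges ∧ s(x, y) ∉ q₂.edges := by
  have hnodup := h.edges_nodup
  rw [edges_append, edges_cons, List.nodup_middle, List.nodup_cons, List.mem_append] at hnodup
  exact not_or.mp hnodup.1

theorem Walk.IsTrail.notMem_edges_takeUntil_or_dropUntil [DecidableEq V] {p : G.Walk a b}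
    (hp : p.IsTrail) (hu : u ∈ p.support) (e : Sym2 V) :
    e ∉ (p.takeUntil u hu).edges ∨ e ∉ (p.dropUntil u hu).edges := by
  have hnodup := hp.edges_nodup
  rw [← p.take_spec hu, edges_append, List.nodup_append] at hnodup
  by_contra! h
  exact hnodup.2.2 _ h.1 _ h.2 rfl

theorem isAcyclic_fromEdgeSet_iff {S : Set (Sym2 V)} :
    (fromEdgeSet S).IsAcyclic ↔
      ∀ ⦃x y⦄, s(x, y) ∈ S → x ≠ y → ¬(fromEdgeSet (S \ {s(x, y)})).Reachable x y := by
  simp [isAcyclic_iff_forall_adj_isBridge, isBridge_iff]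

section Forest

variable [DecidableEq V] {E K : Set (Sym2 V)} (hF : (fromEdgeSet E).IsAcyclic)
include hF

theorem IsAcyclic.not_reachable_fromEdgeSet_sdiff {W : G.Walk a b} (hW : W.IsTrail)
    (hWE : ∀ e ∈ W.edges, e ∈ E) {f : Sym2 V} (hfK : f ∈ K) (hfW : f ∈ W.edges) :
    ¬(fromEdgeSet (E \ K)).Reachable a b := by
  obtain ⟨x, y, q₁, hxy, q₂, rfl, rfl, -⟩ :=
    W.exists_eq_append_cons_of_first_mem_edges (S := {f}) ⟨f, hfW, rfl⟩
  obtain ⟨hxy₁, hxy₂⟩ := hW.notMem_edges_of_append_cons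
  intro hab
  refine isAcyclic_fromEdgeSet_iff.mp hF (hWE _ (by simp)) hxy.ne ?_
  have hmono : fromEdgeSet (E \ K) ≤ fromEdgeSet (E \ {s(x, y)}) :=
    fromEdgeSet_mono (Set.sdiff_subset_sdiff_right (by simpa using hfK))
  have hxa := q₁.reachable_fromEdgeSet_of_mem_support (S := E \ {s(x, y)})
    (fun e he => ⟨hWE e (by simp [he]), fun h => hxy₁ (h ▸ he)⟩)
    q₁.end_mem_support q₁.start_mem_support
  have hby := q₂.reachable_fromEdgeSet_of_mem_support (S := E \ {s(x, y)})
    (fun e he => ⟨hWE e (by simp [he]), fun h => hxy₂ (h ▸ he)⟩)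
    q₂.end_mem_support q₂.start_mem_support
  exact hxa.trans ((hab.mono hmono).trans hby)

theorem IsAcyclic.reachable_fromEdgeSet_sdiff_start_end (hK : K.Nonempty) {W : G.Walk a b}
    (hW : W.IsTrail) (hWE : ∀ e ∈ W.edges, e ∈ E) (hKW : ∀ e ∈ K, e ∈ W.edges) {c d : V}
    {P : G.Walk c d} (hP : P.IsTrail) (hPE : ∀ e ∈ P.edges, e ∈ E) (hKP : ∀ e ∈ K, e ∈ P.edges) :
    (fromEdgeSet (E \ K)).Reachable a c ∨ (fromEdgeSet (E \ K)).Reachable a d := by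
  obtain ⟨f, hf⟩ := hK
  obtain ⟨x, y, q₁, hxy, q₂, rfl, hxyK, hq₁⟩ :=
    W.exists_eq_append_cons_of_first_mem_edges ⟨f, hKW f hf, hf⟩
  have hax := q₁.reachable_fromEdgeSet_of_mem_support (S := E \ K)
    (fun e he => ⟨hWE e (by simp [he]), hq₁ e he⟩) q₁.start_mem_support q₁.end_mem_support
  -- A walk through `x` avoiding `xy` stays on the side of `x`, while the rest of `K` lies on `q₂`.
  have hx_side {c' d' : V} (r : G.Walk c' d') (hrE : ∀ e ∈ r.edges, e ∈ E)
      (hr : s(x, y) ∉ r.edges) (hx : x ∈ r.support) {w : V} (hw : w ∈ r.support) :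
      (fromEdgeSet (E \ K)).Reachable x w := by
    refine r.reachable_fromEdgeSet_of_mem_support (fun e he => ⟨hrE e he, fun heK => ?_⟩) hx hw
    have heq₂ : e ∈ q₂.edges := by
      have heW := hKW e heK
      simp only [Walk.edges_append, Walk.edges_cons, List.mem_append, List.mem_cons] at heW
      rcases heW with heq₁ | rfl | heq₂
      exacts [(hq₁ e heq₁ heK).elim, (hr he).elim, heq₂]
    refine isAcyclic_fromEdgeSet_iff.mp hF (hWE _ (by simp)) hxy.ne ?_
    have hxz := r.reachable_fromEdgeSet_of_mem_support (S := E \ {s(x, y)})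
      (fun f hf => ⟨hrE f hf, fun h => hr (h ▸ hf)⟩) hx
      (r.mem_support_of_mem_edges he e.out_fst_mem)
    have hzy := q₂.reachable_fromEdgeSet_of_mem_support (S := E \ {s(x, y)})
      (fun f hf => ⟨hWE f (by simp [hf]), fun h => hW.notMem_edges_of_append_cons.2 (h ▸ hf)⟩)
      (q₂.mem_support_of_mem_edges heq₂ e.out_fst_mem) q₂.start_mem_support
    exact hxz.trans hzy
  have hxP : x ∈ P.support := P.fst_mem_support_of_mem_edges (hKP _ hxyK)
  rcases hP.notMem_edges_takeUntil_or_dropUntil hxP s(x, y) with h | h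
  · exact .inl (hax.trans (hx_side _ (fun e he => hPE e (P.edges_takeUntil_subset_edges hxP he))
      h (P.takeUntil x hxP).end_mem_support (P.takeUntil x hxP).start_mem_support))
  · exact .inr (hax.trans (hx_side _ (fun e he => hPE e (P.edges_dropUntil_subset_edges hxP he))
      h (P.dropUntil x hxP).start_mem_support (P.dropUntil x hxP).end_mem_support))

theorem IsAcyclic.reachable_fromEdgeSet_sdiff_of_mem {W : G.Walk a b} (hW : W.IsTrail)
    (hWE : ∀ e ∈ W.edges, e ∈ E) {c d : V} {R : G.Walk c d} (hRE : ∀ e ∈ R.edges, e ∈ E)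
    (hKR : ∀ e ∈ K, e ∈ R.edges) {e : Sym2 V} (heW : e ∈ W.edges) (heR : e ∉ R.edges)
    (heK : e ∉ K) {v : V} (hv : v ∈ e) :
    (fromEdgeSet (E \ K)).Reachable a v ∨ (fromEdgeSet (E \ K)).Reachable b v := by
  obtain ⟨x, y, q₁, hxy, q₂, rfl, rfl, -⟩ :=
    W.exists_eq_append_cons_of_first_mem_edges (S := {e}) ⟨e, heW, rfl⟩
  obtain ⟨hxy₁, hxy₂⟩ := hW.notMem_edges_of_append_cons
  have hE : s(x, y) ∈ E := hWE _ (by simp)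
  have hq₁ (f : Sym2 V) (hf : f ∈ q₁.edges) : f ∈ E \ {s(x, y)} :=
    ⟨hWE f (by simp [hf]), fun h => hxy₁ (h ▸ hf)⟩
  have hq₂ (f : Sym2 V) (hf : f ∈ q₂.edges) : f ∈ E \ {s(x, y)} :=
    ⟨hWE f (by simp [hf]), fun h => hxy₂ (h ▸ hf)⟩
  -- `R` would join the two sides of `xy` without using it.
  have hfree : (∀ f ∈ q₁.edges, f ∉ K) ∨ (∀ f ∈ q₂.edges, f ∉ K) := by
    by_contra! ⟨⟨f₁, hf₁, hf₁K⟩, ⟨f₂, hf₂, hf₂K⟩⟩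
    refine isAcyclic_fromEdgeSet_iff.mp hF hE hxy.ne ?_
    have hxz₁ := q₁.reachable_fromEdgeSet_of_mem_support hq₁ q₁.end_mem_support
      (q₁.mem_support_of_mem_edges hf₁ f₁.out_fst_mem)
    have hz₁z₂ := R.reachable_fromEdgeSet_of_mem_support (S := E \ {s(x, y)})
      (fun f hf => ⟨hRE f hf, fun h => heR (h ▸ hf)⟩)
      (R.mem_support_of_mem_edges (hKR f₁ hf₁K) f₁.out_fst_mem)
      (R.mem_support_of_mem_edges (hKR f₂ hf₂K) f₂.out_fst_mem)
    have hz₂y := q₂.reachable_fromEdgeSet_of_mem_support hq₂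
      (q₂.mem_support_of_mem_edges hf₂ f₂.out_fst_mem) q₂.start_mem_support
    exact hxz₁.trans (hz₁z₂.trans hz₂y)
  have hxyH : (fromEdgeSet (E \ K)).Reachable x y :=
    Adj.reachable ((fromEdgeSet_adj _).mpr ⟨⟨hE, heK⟩, hxy.ne⟩)
  have hv' : (fromEdgeSet (E \ K)).Reachable x v ∧ (fromEdgeSet (E \ K)).Reachable y v := by
    rcases Sym2.mem_iff.mp hv with rfl | rfl
    exacts [⟨.refl _, hxyH.symm⟩, ⟨hxyH, .refl _⟩]
  rcases hfree with h | h
  · exact .inl ((q₁.reachable_fromEdgeSet_of_mem_support (S := E \ K)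
      (fun f hf => ⟨(hq₁ f hf).1, h f hf⟩) q₁.start_mem_support q₁.end_mem_support).trans hv'.1)
  · exact .inr ((q₂.reachable_fromEdgeSet_of_mem_support (S := E \ K)
      (fun f hf => ⟨(hq₂ f hf).1, h f hf⟩) q₂.end_mem_support q₂.start_mem_support).trans hv'.2)

end Forest

end SimpleGraph

namespace ShapleyGame

open SimpleGraph

variable {V : Type} [Fintype V] [DecidableEq V] {k : ℕ} {g : ShapleyGame V k}

variable (g) in
def network (P : g.Profile) : SimpleGraph V :=
  fromEdgeSet ↑(g.profileEdges P)

variable (g) in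
def unsharedNetwork (P : g.Profile) : SimpleGraph V :=
  fromEdgeSet ↑(g.profileEdges P \ g.exactly P k)

theorem mem_profileEdges {P : g.Profile} {e : Sym2 V} :
    e ∈ g.profileEdges P ↔ ∃ i, e ∈ (P i).1.edges := by
  simp [profileEdges]

theorem mem_exactly_self {P : g.Profile} {e : Sym2 V} :
    e ∈ g.exactly P k ↔ e ∈ g.profileEdges P ∧ ∀ i, e ∈ (P i).1.edges := by
  have hall := Finset.card_filter_eq_iff (s := Finset.univ) (p := fun i => e ∈ (P i).1.edges)
  rw [Finset.card_fin] at hall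
  rw [exactly, Finset.mem_filter, ke, hall]
  simp

theorem mem_edgeSet_of_mem_profileEdges {P : g.Profile} {e : Sym2 V}
    (he : e ∈ g.profileEdges P) : e ∈ g.G.edgeSet := by
  obtain ⟨i, hi⟩ := mem_profileEdges.mp he
  exact (P i).1.edges_subset_edgeSet hi

theorem socialCost_lt_of_ssubset {P Q : g.Profile} (h : g.profileEdges Q ⊂ g.profileEdges P) :
    g.socialCost Q < g.socialCost P := by
  obtain ⟨e, heP, heQ⟩ := Finset.exists_of_ssubset h
  exact Finset.sum_lt_sum_of_subset h.subset heP heQ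
    (g.c_pos e (mem_edgeSet_of_mem_profileEdges heP))
    fun f hf _ => (g.c_pos f (mem_edgeSet_of_mem_profileEdges hf)).le

theorem exists_profile_of_reachable {F : SimpleGraph V} (hFG : F ≤ g.G)
    (h : ∀ i, F.Reachable (g.s i) (g.t i)) :
    ∃ Q : g.Profile, ∀ e ∈ g.profileEdges Q, e ∈ F.edgeSet := by
  let w i := (h i).some
  refine ⟨fun i => ((w i).transfer g.G fun e he =>
    edgeSet_mono hFG ((w i).edges_subset_edgeSet he)).toPath, fun e he => ?_⟩
  obtain ⟨i, hi⟩ := mem_profileEdges.mp he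
  have hi := Walk.edges_toPath_subset_edges _ hi
  rw [Walk.edges_transfer] at hi
  exact (w i).edges_subset_edgeSet hi

theorem IsSocialOpt.isAcyclic {O : g.Profile} (hO : g.IsSocialOpt O) :
    (g.network O).IsAcyclic := by
  refine isAcyclic_fromEdgeSet_iff.mpr fun x y hxy _ hreach => ?_
  set F := fromEdgeSet (↑(g.profileEdges O) \ {s(x, y)})
  have hplayers (i : Fin k) : F.Reachable (g.s i) (g.t i) :=
    (O i).1.reachable_of_forall_mem_edges fun u v huv => by
      by_cases h : s(u, v) = s(x, y)
      · rcases Sym2.eq_iff.mp h with ⟨rfl, rfl⟩ | ⟨rfl, rfl⟩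
        exacts [hreach, hreach.symm]
      · exact Adj.reachable ((fromEdgeSet_adj _).mpr
          ⟨⟨mem_profileEdges.mpr ⟨i, huv⟩, h⟩, ((O i).1.adj_of_mem_edges huv).ne⟩)
  have hFG : F ≤ g.G := fun u v huv =>
    mem_edgeSet_of_mem_profileEdges ((fromEdgeSet_adj _).mp huv).1.1
  obtain ⟨Q, hQ⟩ := exists_profile_of_reachable hFG hplayers
  have hQO : g.profileEdges Q ⊂ g.profileEdges O := by
    refine Finset.ssubset_of_subset_of_ssubset (fun e he => ?_) (Finset.erase_ssubset hxy)
    have he := hQ e he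
    simp only [F, edgeSet_fromEdgeSet, Set.mem_sdiff, Finset.mem_coe, Set.mem_singleton_iff] at he
    exact Finset.mem_erase.mpr ⟨he.1.2, he.1.1⟩
  exact (hO Q).not_gt (socialCost_lt_of_ssubset hQO)

section Forest

variable {O : g.Profile} (hF : (g.network O).IsAcyclic)
include hF

theorem not_reachable_terminals (hK : (g.exactly O k).Nonempty) (i : Fin k) :
    ¬(g.unsharedNetwork O).Reachable (g.s i) (g.t i) := by
  obtain ⟨f, hf⟩ := hK
  rw [unsharedNetwork, Finset.coe_sdiff]
  exact hF.not_reachable_fromEdgeSet_sdiff (O i).2.isTrail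
    (fun e he => mem_profileEdges.mpr ⟨i, he⟩) (Finset.mem_coe.mpr hf)
    ((mem_exactly_self.mp hf).2 i)

theorem reachable_of_terminal (hK : (g.exactly O k).Nonempty) (j : Fin k) {v : V}
    (hv : ∃ i, v = g.s i ∨ v = g.t i) :
    (g.unsharedNetwork O).Reachable (g.s j) v ∨ (g.unsharedNetwork O).Reachable (g.t j) v := by
  have hK' : (↑(g.exactly O k) : Set (Sym2 V)).Nonempty := hK
  have hKO (i : Fin k) : ∀ e ∈ (↑(g.exactly O k) : Set (Sym2 V)), e ∈ (O i).1.edges :=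
    fun e he => (mem_exactly_self.mp he).2 i
  have hOE (i : Fin k) : ∀ e ∈ (O i).1.edges, e ∈ (↑(g.profileEdges O) : Set (Sym2 V)) :=
    fun e he => mem_profileEdges.mpr ⟨i, he⟩
  obtain ⟨i, rfl | rfl⟩ := hv
  all_goals rw [unsharedNetwork, Finset.coe_sdiff, reachable_comm, @reachable_comm _ _ (g.t j)]
  · exact hF.reachable_fromEdgeSet_sdiff_start_end hK' (O i).2.isTrail (hOE i) (hKO i)
      (O j).2.isTrail (hOE j) (hKO j)
  · exact hF.reachable_fromEdgeSet_sdiff_start_end hK' (O i).2.isTrail.reverse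
      (by simpa using hOE i) (by simpa using hKO i) (O j).2.isTrail (hOE j) (hKO j)

theorem reachable_of_mem_unshared (hK : (g.exactly O k).Nonempty) (j : Fin k) {v : V}
    (hv : ∃ e ∈ g.profileEdges O \ g.exactly O k, v ∈ e) :
    (g.unsharedNetwork O).Reachable (g.s j) v ∨ (g.unsharedNetwork O).Reachable (g.t j) v := by
  obtain ⟨e, he, hve⟩ := hv
  obtain ⟨heE, heK⟩ := Finset.mem_sdiff.mp he
  obtain ⟨i, hei⟩ := mem_profileEdges.mp heE
  obtain ⟨m, hem⟩ : ∃ m, e ∉ (O m).1.edges := by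
    by_contra! h
    exact heK (mem_exactly_self.mpr ⟨heE, h⟩)
  have hterminal : (g.unsharedNetwork O).Reachable (g.s i) v ∨
      (g.unsharedNetwork O).Reachable (g.t i) v := by
    rw [unsharedNetwork, Finset.coe_sdiff]
    exact hF.reachable_fromEdgeSet_sdiff_of_mem (O i).2.isTrail
      (fun f hf => mem_profileEdges.mpr ⟨i, hf⟩) (fun f hf => mem_profileEdges.mpr ⟨m, hf⟩)
      (fun f hf => (mem_exactly_self.mp hf).2 m) hei hem heK hve
  rcases hterminal with h | h
  · exact (reachable_of_terminal hF hK j ⟨i, .inl rfl⟩).imp (·.trans h) (·.trans h)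
  · exact (reachable_of_terminal hF hK j ⟨i, .inr rfl⟩).imp (·.trans h) (·.trans h)

end Forest

end ShapleyGame

/-- if `O` is a social optimum in which the set `O^k` of edges shared by
all `k` players is non-empty, then the edge set `E(O) ∖ O^k` induces exactly two trees
(two connected components, each acyclic), and every player has exactly one of her two
terminals in each of the two trees. Here `A` and `B` are the vertex sets of the two
components of the graph `H` with edge set `E(O) ∖ O^k`. -/
theorem opt_minus_shared_two_trees {V : Type} [Fintype V] [DecidableEq V] {k : ℕ}
    (g : ShapleyGame V k) (O : g.Profile) (hO : g.IsSocialOpt O)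
    (hOk : (g.exactly O k).Nonempty) :
    ∃ A B : Set V,
      Disjoint A B ∧
      -- every vertex incident to an edge of `E(O) ∖ O^k`, and every terminal,
      -- lies in one of the two components
      (∀ v : V, (∃ e ∈ g.profileEdges O \ g.exactly O k, v ∈ e) → v ∈ A ∪ B) ∧
      -- the graph on `E(O) ∖ O^k` is acyclic (each component is a tree) ...
      (SimpleGraph.fromEdgeSet
        (↑(g.profileEdges O \ g.exactly O k) : Set (Sym2 V))).IsAcyclic ∧
      -- ... each of `A`, `B` is connected in it ...
      (∀ a ∈ A, ∀ a' ∈ A,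
        (SimpleGraph.fromEdgeSet
          (↑(g.profileEdges O \ g.exactly O k) : Set (Sym2 V))).Reachable a a') ∧
      (∀ b ∈ B, ∀ b' ∈ B,
        (SimpleGraph.fromEdgeSet
          (↑(g.profileEdges O \ g.exactly O k) : Set (Sym2 V))).Reachable b b') ∧
      -- ... and `A`, `B` are distinct components: no connection between them
      (∀ a ∈ A, ∀ b ∈ B,
        ¬ (SimpleGraph.fromEdgeSet
          (↑(g.profileEdges O \ g.exactly O k) : Set (Sym2 V))).Reachable a b) ∧
      -- every player has exactly one terminal in each of the two trees
      (∀ i : Fin k, (g.s i ∈ A ∧ g.t i ∈ B) ∨ (g.s i ∈ B ∧ g.t i ∈ A)) := by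
  have hF := hO.isAcyclic
  obtain ⟨j, -⟩ :=
    ShapleyGame.mem_profileEdges.mp (ShapleyGame.mem_exactly_self.mp hOk.choose_spec).1
  have hsep := ShapleyGame.not_reachable_terminals hF hOk
  let H := g.unsharedNetwork O
  refine ⟨{v | H.Reachable (g.s j) v}, {v | H.Reachable (g.t j) v},
    Set.disjoint_left.mpr fun v (hs : H.Reachable _ v) (ht : H.Reachable _ v) =>
      hsep j (hs.trans ht.symm),
    fun v hv => ShapleyGame.reachable_of_mem_unshared hF hOk j hv,
    hF.anti (SimpleGraph.fromEdgeSet_mono (Finset.coe_subset.mpr Finset.sdiff_subset)),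
    fun a (ha : H.Reachable _ a) a' (ha' : H.Reachable _ a') => ha.symm.trans ha',
    fun b (hb : H.Reachable _ b) b' (hb' : H.Reachable _ b') => hb.symm.trans hb',
    fun a (ha : H.Reachable _ a) b (hb : H.Reachable _ b) hab =>
      hsep j ((ha.trans hab).trans hb.symm), fun i => ?_⟩
  rcases ShapleyGame.reachable_of_terminal hF hOk j ⟨i, .inl rfl⟩ with hs | hs <;>
  rcases ShapleyGame.reachable_of_terminal hF hOk j ⟨i, .inr rfl⟩ with ht | ht
  · exact absurd (hs.symm.trans ht) (hsep i)
  · exact .inl ⟨hs, ht⟩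
  · exact .inr ⟨hs, ht⟩
  · exact absurd (hs.symm.trans ht) (hsep i)
end
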